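/- If p and p+2 are both prime with p ≡ 3 (mod 4), then n = p(p+2) satisfies Φ(n) = F(n) = n + 1 = (p+1)², so n is a Gaussian Lehmer number (Φ(n) divides F(n)). -/

import Mathlib

/-!
By the Chinese remainder theorem the number of points of `x² + y² = 1` over `ZMod n` is
multiplicative in `n`. Over `𝔽_q` with `q ≡ 3 (mod 4)`, `-1` is not a square, so stereographic
projection from `(-1, 0)` is a bijection with `𝔽_q ∪ {∞}` and there are `q + 1` points; with
`q ≡ 1 (mod 4)` a square root `i` of `-1` turns the circle into the hyperbola
`(x + iy)(x - iy) = 1`, which has `q - 1` points. For twin primes `p ≡ 3 (mod 4)` this gives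
`Φ(p(p+2)) = (p + 1)² = p(p + 2) + 1 = F(p(p + 2))`.
-/

/-- The analogue of `n - 1` in the Gaussian setting. -/
def gaussF (n : ℕ) : ℕ :=
  if n % 4 = 1 then n - 1 else if n % 4 = 3 then n + 1 else n

/-- `gPhi n` is the number of norm-one elements of `ℤ[i]/nℤ[i]`. -/
noncomputable def gPhi (n : ℕ) : ℕ :=
  Nat.card {x : ZMod n × ZMod n // x.1 ^ 2 + x.2 ^ 2 = 1}

abbrev UnitCircle (R : Type*) [CommRing R] : Type _ :=
  {x : R × R // x.1 ^ 2 + x.2 ^ 2 = 1}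

namespace UnitCircle

def congr {R S : Type*} [CommRing R] [CommRing S] (e : R ≃+* S) :
    UnitCircle R ≃ UnitCircle S where
  toFun x := ⟨(e x.1.1, e x.1.2), by rw [← map_pow, ← map_pow, ← map_add, x.2, map_one]⟩
  invFun x := ⟨(e.symm x.1.1, e.symm x.1.2), by
    rw [← map_pow, ← map_pow, ← map_add, x.2, map_one]⟩
  left_inv x := by ext <;> simp
  right_inv x := by ext <;> simp

def prodEquiv {A B : Type*} [CommRing A] [CommRing B] :
    UnitCircle (A × B) ≃ UnitCircle A × UnitCircle B where
  toFun x := (⟨(x.1.1.1, x.1.2.1), congrArg Prod.fst x.2⟩,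
    ⟨(x.1.1.2, x.1.2.2), congrArg Prod.snd x.2⟩)
  invFun x := ⟨((x.1.1.1, x.2.1.1), (x.1.1.2, x.2.1.2)), Prod.ext x.1.2 x.2.2⟩
  left_inv _ := rfl
  right_inv _ := rfl

section Field

variable {F : Type*} [Field F]

lemma two_ne_zero_of_not_isSquare_neg_one (h : ¬IsSquare (-1 : F)) : (2 : F) ≠ 0 := by
  intro h2
  exact h ⟨1, by linear_combination -h2⟩

lemma sq_add_one_ne_zero_of_not_isSquare_neg_one (h : ¬IsSquare (-1 : F)) (t : F) :
    t ^ 2 + 1 ≠ 0 :=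
  fun ht ↦ h ⟨t, by linear_combination -ht⟩

open Classical in
/-- Stereographic projection from `(-1, 0)`: the line of slope `t` through `(-1, 0)` meets the
circle again at `((1 - t²)/(1 + t²), 2t/(1 + t²))`, and `none` stands for `(-1, 0)` itself. -/
noncomputable def optionEquivOfNotIsSquare (h : ¬IsSquare (-1 : F)) :
    Option F ≃ UnitCircle F where
  toFun
    | none => ⟨(-1, 0), by ring⟩
    | some t => ⟨((1 - t ^ 2) / (t ^ 2 + 1), 2 * t / (t ^ 2 + 1)), by
        have := sq_add_one_ne_zero_of_not_isSquare_neg_one h t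
        field_simp
        ring⟩
  invFun x := if x.1.1 = -1 then none else some (x.1.2 / (x.1.1 + 1))
  left_inv
    | none => by simp
    | some t => by
      have ht := sq_add_one_ne_zero_of_not_isSquare_neg_one h t
      have h2 := two_ne_zero_of_not_isSquare_neg_one h
      have hne : (1 - t ^ 2) / (t ^ 2 + 1) ≠ -1 := by
        rw [Ne, div_eq_iff ht]
        intro hh
        exact h2 (by linear_combination hh)
      simp only [hne, if_false, Option.some.injEq]
      rw [div_add_one ht, div_div_div_cancel_right₀ ht,
        show 1 - t ^ 2 + (t ^ 2 + 1) = (2 : F) by ring, mul_div_cancel_left₀ t h2]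
  right_inv := by
    rintro ⟨⟨a, b⟩, hab⟩
    by_cases ha : a = -1
    · subst ha
      have hb : b = 0 := pow_eq_zero_iff two_ne_zero |>.mp (by linear_combination hab)
      simp [hb]
    · have ha1 : a + 1 ≠ 0 := fun hh ↦ ha (by linear_combination hh)
      have ht := sq_add_one_ne_zero_of_not_isSquare_neg_one h (b / (a + 1))
      simp only [ha, if_false]
      refine Subtype.ext (Prod.ext ?_ ?_) <;> dsimp only <;> rw [div_eq_iff ht] <;> field_simp
      · linear_combination (-(a + 1)) * hab
      · linear_combination (-b) * hab

lemma card_of_not_isSquare_neg_one [Finite F] (h : ¬IsSquare (-1 : F)) :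
    Nat.card (UnitCircle F) = Nat.card F + 1 := by
  rw [← Nat.card_congr (optionEquivOfNotIsSquare h), Finite.card_option]

lemma ne_zero_of_sq_eq_neg_one {i : F} (hi : i ^ 2 = -1) : i ≠ 0 := by
  rintro rfl
  simp at hi

/-- With `i² = -1` the circle is the hyperbola `uv = 1` in the coordinates `u = x + iy`,
`v = x - iy`. -/
def equivUnitsOfSqEqNegOne {i : F} (hi : i ^ 2 = -1) (h2 : (2 : F) ≠ 0) :
    UnitCircle F ≃ Fˣ where
  toFun x := ⟨x.1.1 + i * x.1.2, x.1.1 - i * x.1.2,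
    by linear_combination x.2 - x.1.2 ^ 2 * hi, by linear_combination x.2 - x.1.2 ^ 2 * hi⟩
  invFun u := ⟨((u + (u : F)⁻¹) / 2, (u - (u : F)⁻¹) / (2 * i)), by
    have := ne_zero_of_sq_eq_neg_one hi
    have hu := u.ne_zero
    field_simp
    linear_combination ((u : F) ^ 2 - 1) ^ 2 * hi⟩
  left_inv := by
    rintro ⟨⟨a, b⟩, hab⟩
    have := ne_zero_of_sq_eq_neg_one hi
    have hinv : (a + i * b)⁻¹ = a - i * b :=
      inv_eq_of_mul_eq_one_right (by linear_combination hab - b ^ 2 * hi)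
    refine Subtype.ext (Prod.ext ?_ ?_) <;> dsimp only <;> rw [hinv] <;> field_simp <;> ring
  right_inv u := by
    have := ne_zero_of_sq_eq_neg_one hi
    ext
    dsimp only
    field_simp
    ring

lemma card_of_sq_eq_neg_one {i : F} (hi : i ^ 2 = -1) (h2 : (2 : F) ≠ 0) :
    Nat.card (UnitCircle F) = Nat.card F - 1 := by
  rw [Nat.card_congr (equivUnitsOfSqEqNegOne hi h2), Nat.card_units]

end Field

end UnitCircle

lemma gPhi_eq_card_unitCircle (n : ℕ) : gPhi n = Nat.card (UnitCircle (ZMod n)) := rfl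

lemma gPhi_mul_of_coprime {a b : ℕ} (h : a.Coprime b) : gPhi (a * b) = gPhi a * gPhi b := by
  simp only [gPhi_eq_card_unitCircle]
  rw [Nat.card_congr ((UnitCircle.congr (ZMod.chineseRemainder h)).trans UnitCircle.prodEquiv),
    Nat.card_prod]

lemma gPhi_prime_of_mod_four_eq_three {p : ℕ} [Fact p.Prime] (h : p % 4 = 3) :
    gPhi p = p + 1 := by
  rw [gPhi_eq_card_unitCircle, UnitCircle.card_of_not_isSquare_neg_one
    (ZMod.exists_sq_eq_neg_one_iff.not_left.mpr h), Nat.card_zmod]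

lemma gPhi_prime_of_mod_four_eq_one {p : ℕ} [Fact p.Prime] (h : p % 4 = 1) :
    gPhi p = p - 1 := by
  obtain ⟨i, hi⟩ := ZMod.exists_sq_eq_neg_one_iff.mpr (by omega : p % 4 ≠ 3)
  have h2 : (2 : ZMod p) ≠ 0 := Ring.two_ne_zero (by rw [ZMod.ringChar_zmod_n]; omega)
  rw [gPhi_eq_card_unitCircle, UnitCircle.card_of_sq_eq_neg_one (by rw [sq, hi]) h2,
    Nat.card_zmod]

lemma gaussF_of_mod_four_eq_three {n : ℕ} (h : n % 4 = 3) : gaussF n = n + 1 := by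
  simp [gaussF, h]

theorem twin_primes_gauss_lehmer (p : ℕ) (hp : p.Prime) (hp2 : (p + 2).Prime)
    (h4 : p % 4 = 3) :
    gPhi (p * (p + 2)) = gaussF (p * (p + 2)) ∧
      gaussF (p * (p + 2)) = p * (p + 2) + 1 ∧
      p * (p + 2) + 1 = (p + 1) ^ 2 ∧
      gPhi (p * (p + 2)) ∣ gaussF (p * (p + 2)) := by
  have := Fact.mk hp
  have := Fact.mk hp2
  have hF : gaussF (p * (p + 2)) = p * (p + 2) + 1 :=
    gaussF_of_mod_four_eq_three (by rw [Nat.mul_mod, h4, Nat.add_mod, h4])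
  have hsq : p * (p + 2) + 1 = (p + 1) ^ 2 := by ring
  have hPhi : gPhi (p * (p + 2)) = (p + 1) ^ 2 := by
    rw [gPhi_mul_of_coprime ((Nat.coprime_primes hp hp2).mpr (by omega)),
      gPhi_prime_of_mod_four_eq_three h4, gPhi_prime_of_mod_four_eq_one (by omega)]
    simp [sq]
  rw [hF, hPhi, hsq]
  exact ⟨rfl, rfl, rfl, dvd_rfl⟩
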